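/- arXiv:1401.0399 — 4 statements merged into one kernel-verified Lean document; each statement's English description precedes it below -/
import Mathlib

section
/- Let L : ℝ² → M₃(ℝ) be a polynomial map, written in block form L(k) = [[σ(k), r(k)ᵀ], [c(k), Q(k)]] with σ(k) ∈ ℝ, r(k), c(k) ∈ ℝ² and Q(k) ∈ M₂(ℝ). Then L(Rk) = diag(1,R) · L(k) · diag(1,R)ᵀ for all R ∈ SO(2) and all k ∈ ℝ² if and only if there exist one-variable real polynomials a, b, c₁, d, e, m, z, n, h such that for all k ∈ ℝ²: σ(k) = a(s(k)), r(k) = b(s(k)) k + c₁(s(k)) k^⊥, c(k) = d(s(k)) k + e(s(k)) k^⊥, and Q(k) = m(s(k)) I₂ + z(s(k)) k kᵀ + n(s(k)) J₀ + h(s(k)) k (k^⊥)ᵀ. (This is the Fourier-symbol form of the statement that a general linear acoustic-type partial differential system in two space dimensions, for a scalar density field ρ and a momentum vector field J, is invariant by rotation exactly when it has the form ∂_tρ + Σ_k(α_k Δ^k ρ + β_k Δ^k div J + γ_k Δ^k div J^⊥) = 0, ∂_t J + Σ_k(δ_k ∇Δ^k ρ + μ_k Δ^k J + ζ_k ∇div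 Δ^k J + ε_k ∇^⊥Δ^k ρ + ν_k Δ^k J^⊥ + η_k ∇div Δ^k J^⊥) = 0 with finitely many nonzero real coefficients.) -/
/-!
Every `k ∈ ℝ²` is the image of a point `(t, 0)` of the first axis under a rotation, so a
rotation-invariant symbol is determined by its values on that axis. The half-turn `R = -I`
makes the entries of `L(t, 0)` even in `t` in the scalar and `Q` blocks and odd in the `r` and `c`
blocks, so they are `f(t²)` or `t f(t²)` for polynomials `f`. The quarter turn `J₀` fixes the
origin, so `Q(0)` commutes with `J₀`; this is what makes the coefficients `z` and `h` of `k kᵀ`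
and `k (k^⊥)ᵀ` polynomial. Conversely, the normal form is invariant because `s(R k) = s(k)`,
`(R k)^⊥ = R k^⊥` and `R (u vᵀ) Rᵀ = (R u)(R v)ᵀ`.
-/

open Matrix

def sq2 (k : Fin 2 → ℝ) : ℝ := k 0 ^ 2 + k 1 ^ 2

def perp2 (k : Fin 2 → ℝ) : Fin 2 → ℝ := ![k 1, -k 0]

def J0mat : Matrix (Fin 2) (Fin 2) ℝ := !![0, 1; -1, 0]

def diag1R2 (R : Matrix (Fin 2) (Fin 2) ℝ) : Matrix (Fin 3) (Fin 3) ℝ :=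
  !![1, 0, 0; 0, R 0 0, R 0 1; 0, R 1 0, R 1 1]

namespace Polynomial

variable {R : Type*} [CommRing R]

theorem expand_contract_add_X_mul_expand_contract_divX (p : R[X]) :
    expand R 2 (contract 2 p) + X * expand R 2 (contract 2 p.divX) = p := by
  ext (_ | n)
  · simp [coeff_expand, coeff_contract]
  · simp only [coeff_add, coeff_X_mul, coeff_expand two_pos, coeff_contract two_ne_zero,
      coeff_divX]
    rcases Nat.even_or_odd' n with ⟨m, rfl | rfl⟩
    · have h : ¬ 2 ∣ 2 * m + 1 := by omega
      simp [h, mul_comm m]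
    · have h : ¬ 2 ∣ 2 * m + 1 := by omega
      have h' : 2 ∣ 2 * m + 1 + 1 := ⟨m + 1, by ring⟩
      simp only [h, h', if_true, if_false, add_zero]
      congr 1; omega

theorem eval_eq_eval_contract_add_mul_eval_contract_divX (p : R[X]) (t : R) :
    p.eval t = (contract 2 p).eval (t ^ 2) + t * (contract 2 p.divX).eval (t ^ 2) := by
  conv_lhs => rw [← expand_contract_add_X_mul_expand_contract_divX p]
  simp

theorem eval_eq_mul_eval_divX_add_eval_zero (p : R[X]) (s : R) :
    p.eval s = s * p.divX.eval s + p.eval 0 := by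
  conv_lhs => rw [← divX_mul_X_add p]
  simp [coeff_zero_eq_eval_zero, mul_comm]

variable [NoZeroDivisors R] [CharZero R]

theorem eval_eq_eval_contract_of_even {p : R[X]} (hp : ∀ t, p.eval (-t) = p.eval t) (t : R) :
    p.eval t = (contract 2 p).eval (t ^ 2) := by
  have h := hp t
  rw [eval_eq_eval_contract_add_mul_eval_contract_divX p t,
    eval_eq_eval_contract_add_mul_eval_contract_divX p (-t), neg_sq] at h
  rw [eval_eq_eval_contract_add_mul_eval_contract_divX p t, add_eq_left]
  have : 2 * (t * (contract 2 p.divX).eval (t ^ 2)) = 0 := by linear_combination -h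
  simpa using this

theorem eval_eq_mul_eval_contract_divX_of_odd {p : R[X]} (hp : ∀ t, p.eval (-t) = -p.eval t)
    (t : R) : p.eval t = t * (contract 2 p.divX).eval (t ^ 2) := by
  have h := hp t
  rw [eval_eq_eval_contract_add_mul_eval_contract_divX p t,
    eval_eq_eval_contract_add_mul_eval_contract_divX p (-t), neg_sq] at h
  rw [eval_eq_eval_contract_add_mul_eval_contract_divX p t, add_eq_right]
  have : 2 * (contract 2 p).eval (t ^ 2) = 0 := by linear_combination h
  simpa using this

end Polynomial

namespace MvPolynomial

theorem eval_aeval_polynomial {σ R : Type*} [CommSemiring R] (f : σ → Polynomial R)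
    (P : MvPolynomial σ R) (t : R) :
    (aeval f P).eval t = eval (fun i => (f i).eval t) P := by
  rw [← Polynomial.coe_aeval_eq_eval, comp_aeval_apply]
  simp only [Polynomial.coe_aeval_eq_eval, aeval_eq_eval]

theorem eval_aeval_axis {R : Type*} [CommSemiring R] (P : MvPolynomial (Fin 2) R) (t : R) :
    (aeval ![Polynomial.X, 0] P).eval t = eval ![t, 0] P := by
  rw [eval_aeval_polynomial]
  congr
  funext i
  fin_cases i <;> simp

end MvPolynomial

theorem mul_vecMulVec_mul_transpose {α m n : Type*} [CommSemiring α] [Fintype n]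
    (A : Matrix m n α) (u v : n → α) :
    A * vecMulVec u v * Aᵀ = vecMulVec (A *ᵥ u) (A *ᵥ v) := by
  rw [mul_vecMulVec, vecMulVec_mul, vecMul_transpose]

theorem perp2_eq_J0mat_mulVec (k : Fin 2 → ℝ) : perp2 k = J0mat *ᵥ k := by
  ext i; fin_cases i <;> simp [perp2, J0mat, mulVec, dotProduct]

theorem sq2_eq_dotProduct (k : Fin 2 → ℝ) : sq2 k = k ⬝ᵥ k := by
  simp [sq2, dotProduct, Fin.sum_univ_two, sq]

theorem J0mat_mul_mul_transpose (Q : Matrix (Fin 2) (Fin 2) ℝ) :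
    J0mat * Q * J0matᵀ = !![Q 1 1, -Q 1 0; -Q 0 1, Q 0 0] := by
  ext i j
  fin_cases i <;> fin_cases j <;> simp [J0mat, mul_apply, Fin.sum_univ_two, vecMul, dotProduct]

section SpecialOrthogonal

variable {R : Matrix (Fin 2) (Fin 2) ℝ}

theorem sq2_mulVec (hR : Rᵀ * R = 1) (k : Fin 2 → ℝ) : sq2 (R *ᵥ k) = sq2 k := by
  rw [sq2_eq_dotProduct, sq2_eq_dotProduct, dotProduct_mulVec, ← mulVec_transpose, mulVec_mulVec,
    hR, one_mulVec]

theorem apply_one_one_eq_and_apply_zero_one_eq_neg (hR : Rᵀ * R = 1) (hdet : R.det = 1) :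
    R 1 1 = R 0 0 ∧ R 0 1 = -R 1 0 := by
  have e00 := congrFun₂ hR 0 0
  have e01 := congrFun₂ hR 0 1
  simp only [mul_apply, transpose_apply, Fin.sum_univ_two, one_apply_eq, one_apply_ne, ne_eq,
    zero_ne_one, not_false_eq_true] at e00 e01
  rw [det_fin_two] at hdet
  constructor
  · linear_combination (-(R 1 1)) * e00 + (R 0 0) * hdet + (R 1 0) * e01
  · linear_combination (-(R 0 1)) * e00 - (R 1 0) * hdet + (R 0 0) * e01

theorem mul_J0mat_comm (hR : Rᵀ * R = 1) (hdet : R.det = 1) : R * J0mat = J0mat * R := by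
  obtain ⟨h11, h01⟩ := apply_one_one_eq_and_apply_zero_one_eq_neg hR hdet
  ext i j
  fin_cases i <;> fin_cases j <;> simp [J0mat, mul_apply, Fin.sum_univ_two, h11, h01]

theorem mul_J0mat_mul_transpose (hR : Rᵀ * R = 1) (hdet : R.det = 1) :
    R * J0mat * Rᵀ = J0mat := by
  rw [mul_J0mat_comm hR hdet, Matrix.mul_assoc, mul_eq_one_comm.1 hR, Matrix.mul_one]

theorem perp2_mulVec (hR : Rᵀ * R = 1) (hdet : R.det = 1) (k : Fin 2 → ℝ) :
    perp2 (R *ᵥ k) = R *ᵥ perp2 k := by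
  rw [perp2_eq_J0mat_mulVec, perp2_eq_J0mat_mulVec, mulVec_mulVec, mulVec_mulVec,
    mul_J0mat_comm hR hdet]

end SpecialOrthogonal

noncomputable def rotationMatrix (θ : ℝ) : Matrix (Fin 2) (Fin 2) ℝ :=
  !![Real.cos θ, -Real.sin θ; Real.sin θ, Real.cos θ]

theorem rotationMatrix_transpose_mul_self (θ : ℝ) :
    (rotationMatrix θ)ᵀ * rotationMatrix θ = 1 := by
  ext i j
  fin_cases i <;> fin_cases j <;>
    simp [rotationMatrix, mul_apply, Fin.sum_univ_two, ← sq, mul_comm]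

theorem det_rotationMatrix (θ : ℝ) : (rotationMatrix θ).det = 1 := by
  simp [rotationMatrix, det_fin_two_of, ← sq]

theorem exists_rotationMatrix_mulVec_eq (k : Fin 2 → ℝ) :
    ∃ θ t : ℝ, rotationMatrix θ *ᵥ ![t, 0] = k := by
  refine ⟨Complex.arg ⟨k 0, k 1⟩, ‖(⟨k 0, k 1⟩ : ℂ)‖, ?_⟩
  ext i
  fin_cases i <;> simp [rotationMatrix, mulVec, dotProduct, Fin.sum_univ_two, mul_comm]

def fromBlocks12 (σ : ℝ) (r c : Fin 2 → ℝ) (Q : Matrix (Fin 2) (Fin 2) ℝ) :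
    Matrix (Fin 3) (Fin 3) ℝ :=
  !![σ, r 0, r 1; c 0, Q 0 0, Q 0 1; c 1, Q 1 0, Q 1 1]

theorem eq_fromBlocks12_iff {M : Matrix (Fin 3) (Fin 3) ℝ} {σ : ℝ} {r c : Fin 2 → ℝ}
    {Q : Matrix (Fin 2) (Fin 2) ℝ} :
    M = fromBlocks12 σ r c Q ↔ M 0 0 = σ ∧ (∀ j, M 0 j.succ = r j) ∧ (∀ i, M i.succ 0 = c i) ∧
      ∀ i j, M i.succ j.succ = Q i j := by
  constructor
  · rintro rfl
    exact ⟨rfl, fun j => by fin_cases j <;> rfl, fun i => by fin_cases i <;> rfl,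
      fun i j => by fin_cases i <;> fin_cases j <;> rfl⟩
  · rintro ⟨h00, h0s, hs0, hss⟩
    ext i j
    fin_cases i <;> fin_cases j
    exacts [h00, h0s 0, h0s 1, hs0 0, hss 0 0, hss 0 1, hs0 1, hss 1 0, hss 1 1]

theorem fromBlocks12_self (M : Matrix (Fin 3) (Fin 3) ℝ) :
    fromBlocks12 (M 0 0) (fun j => M 0 j.succ) (fun i => M i.succ 0)
      (of fun i j => M i.succ j.succ) = M :=
  (eq_fromBlocks12_iff.2 ⟨rfl, fun _ => rfl, fun _ => rfl, fun _ _ => rfl⟩).symm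

theorem diag1R2_mul_fromBlocks12_mul_transpose (R : Matrix (Fin 2) (Fin 2) ℝ) (σ : ℝ)
    (r c : Fin 2 → ℝ) (Q : Matrix (Fin 2) (Fin 2) ℝ) :
    diag1R2 R * fromBlocks12 σ r c Q * (diag1R2 R)ᵀ =
      fromBlocks12 σ (R *ᵥ r) (R *ᵥ c) (R * Q * Rᵀ) := by
  ext i j
  fin_cases i <;> fin_cases j <;>
    simp [diag1R2, fromBlocks12, mul_apply, Fin.sum_univ_three, Fin.sum_univ_two, mulVec,
      dotProduct] <;> ring

open Polynomial in
def acousticSymbol (a b c₁ d e m z n h : ℝ[X]) (k : Fin 2 → ℝ) :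
    Matrix (Fin 3) (Fin 3) ℝ :=
  fromBlocks12 (a.eval (sq2 k)) (b.eval (sq2 k) • k + c₁.eval (sq2 k) • perp2 k)
    (d.eval (sq2 k) • k + e.eval (sq2 k) • perp2 k)
    (m.eval (sq2 k) • 1 + z.eval (sq2 k) • vecMulVec k k + n.eval (sq2 k) • J0mat
      + h.eval (sq2 k) • vecMulVec k (perp2 k))

open Polynomial in
theorem eq_acousticSymbol_iff {M : Matrix (Fin 3) (Fin 3) ℝ} {a b c₁ d e m z n h : ℝ[X]}
    {k : Fin 2 → ℝ} :
    M = acousticSymbol a b c₁ d e m z n h k ↔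
      M 0 0 = eval (sq2 k) a
        ∧ (∀ i : Fin 2, M 0 i.succ = eval (sq2 k) b * k i + eval (sq2 k) c₁ * perp2 k i)
        ∧ (∀ i : Fin 2, M i.succ 0 = eval (sq2 k) d * k i + eval (sq2 k) e * perp2 k i)
        ∧ (∀ i j : Fin 2, M i.succ j.succ =
            eval (sq2 k) m * (1 : Matrix (Fin 2) (Fin 2) ℝ) i j + eval (sq2 k) z * (k i * k j)
            + eval (sq2 k) n * J0mat i j + eval (sq2 k) h * (k i * perp2 k j)) := by
  simp only [acousticSymbol, eq_fromBlocks12_iff, Pi.add_apply, Pi.smul_apply, Matrix.add_apply,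
    Matrix.smul_apply, vecMulVec_apply, smul_eq_mul]

def IsRotationInvariant (L : (Fin 2 → ℝ) → Matrix (Fin 3) (Fin 3) ℝ) : Prop :=
  ∀ R : Matrix (Fin 2) (Fin 2) ℝ, Rᵀ * R = 1 → R.det = 1 →
    ∀ k : Fin 2 → ℝ, L (R.mulVec k) = diag1R2 R * L k * (diag1R2 R)ᵀ

theorem isRotationInvariant_acousticSymbol (a b c₁ d e m z n h : Polynomial ℝ) :
    IsRotationInvariant (acousticSymbol a b c₁ d e m z n h) := by
  intro R hR hdet k
  simp only [acousticSymbol, diag1R2_mul_fromBlocks12_mul_transpose, sq2_mulVec hR,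
    perp2_mulVec hR hdet, mulVec_add, mulVec_smul, Matrix.mul_add, Matrix.add_mul,
    Matrix.mul_smul, Matrix.smul_mul, Matrix.mul_one, mul_eq_one_comm.1 hR,
    mul_J0mat_mul_transpose hR hdet, mul_vecMulVec_mul_transpose]

namespace IsRotationInvariant

variable {L : (Fin 2 → ℝ) → Matrix (Fin 3) (Fin 3) ℝ}

theorem eq_of_forall_axis {G : (Fin 2 → ℝ) → Matrix (Fin 3) (Fin 3) ℝ}
    (hL : IsRotationInvariant L) (hG : IsRotationInvariant G)
    (h : ∀ t : ℝ, L ![t, 0] = G ![t, 0]) : L = G := by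
  funext k
  obtain ⟨θ, t, rfl⟩ := exists_rotationMatrix_mulVec_eq k
  rw [hL _ (rotationMatrix_transpose_mul_self θ) (det_rotationMatrix θ),
    hG _ (rotationMatrix_transpose_mul_self θ) (det_rotationMatrix θ), h]

theorem apply_neg (hL : IsRotationInvariant L) (k : Fin 2 → ℝ) :
    L (-k) = fromBlocks12 (L k 0 0) (-fun j => L k 0 j.succ) (-fun i => L k i.succ 0)
      (of fun i j => L k i.succ j.succ) := by
  have h := hL (-1) (by simp) (by simp [det_neg]) k
  rw [← fromBlocks12_self (L k), diag1R2_mul_fromBlocks12_mul_transpose] at h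
  simpa only [neg_mulVec, one_mulVec, transpose_neg, transpose_one, Matrix.neg_mul,
    Matrix.one_mul, Matrix.mul_neg, Matrix.mul_one, neg_neg] using h

/-- The quarter turn `J₀` fixes the origin, so the lower right block of `L 0` commutes with it. -/
theorem apply_zero_succ_succ (hL : IsRotationInvariant L) :
    L 0 1 1 = L 0 2 2 ∧ L 0 1 2 = -L 0 2 1 := by
  have h := hL J0mat
    (by ext i j; fin_cases i <;> fin_cases j <;> simp [J0mat, mul_apply, Fin.sum_univ_two])
    (by simp [J0mat, det_fin_two]) 0
  rw [mulVec_zero] at h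
  conv_rhs at h => rw [← fromBlocks12_self (L 0), diag1R2_mul_fromBlocks12_mul_transpose,
    J0mat_mul_mul_transpose]
  have hQ := (eq_fromBlocks12_iff.1 h).2.2.2
  exact ⟨hQ 0 0, hQ 0 1⟩

open Polynomial in
theorem exists_axis_eq_fromBlocks12 (hL : IsRotationInvariant L)
    (hpoly : ∃ P : Matrix (Fin 3) (Fin 3) (MvPolynomial (Fin 2) ℝ),
      ∀ (k : Fin 2 → ℝ) (i j : Fin 3), L k i j = MvPolynomial.eval k (P i j)) :
    ∃ (σ : ℝ[X]) (r c : Fin 2 → ℝ[X]) (Q : Fin 2 → Fin 2 → ℝ[X]), ∀ t : ℝ,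
      L ![t, 0] = fromBlocks12 (σ.eval (t ^ 2)) (fun j => t * (r j).eval (t ^ 2))
        (fun i => t * (c i).eval (t ^ 2)) (of fun i j => (Q i j).eval (t ^ 2)) := by
  obtain ⟨P, hP⟩ := hpoly
  set p : Fin 3 → Fin 3 → ℝ[X] := fun i j => MvPolynomial.aeval ![X, 0] (P i j)
  have hp : ∀ t i j, L ![t, 0] i j = (p i j).eval t := fun t i j => by
    rw [hP, MvPolynomial.eval_aeval_axis]
  have hneg := fun t : ℝ => eq_fromBlocks12_iff.1 <| by
    simpa only [Matrix.neg_cons, Matrix.neg_empty, neg_zero] using hL.apply_neg ![t, 0]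
  refine ⟨contract 2 (p 0 0), fun j => contract 2 (p 0 j.succ).divX,
    fun i => contract 2 (p i.succ 0).divX, fun i j => contract 2 (p i.succ j.succ),
    fun t => eq_fromBlocks12_iff.2 ⟨?_, fun j => ?_, fun i => ?_, fun i j => ?_⟩⟩
  · refine (hp t 0 0).trans (eval_eq_eval_contract_of_even (fun s => ?_) t)
    rw [← hp, ← hp, (hneg s).1]
  · refine (hp t 0 j.succ).trans (eval_eq_mul_eval_contract_divX_of_odd (fun s => ?_) t)
    rw [← hp, ← hp, (hneg s).2.1 j]; rfl
  · refine (hp t i.succ 0).trans (eval_eq_mul_eval_contract_divX_of_odd (fun s => ?_) t)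
    rw [← hp, ← hp, (hneg s).2.2.1 i]; rfl
  · refine (hp t i.succ j.succ).trans (eval_eq_eval_contract_of_even (fun s => ?_) t)
    rw [← hp, ← hp, (hneg s).2.2.2 i j]; rfl

open Polynomial in
theorem exists_eq_acousticSymbol (hL : IsRotationInvariant L)
    (hpoly : ∃ P : Matrix (Fin 3) (Fin 3) (MvPolynomial (Fin 2) ℝ),
      ∀ (k : Fin 2 → ℝ) (i j : Fin 3), L k i j = MvPolynomial.eval k (P i j)) :
    ∃ a b c₁ d e m z n h : ℝ[X], L = acousticSymbol a b c₁ d e m z n h := by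
  obtain ⟨σ, r, c, Q, hax⟩ := hL.exists_axis_eq_fromBlocks12 hpoly
  have hQ0 : (Q 0 0).eval 0 = (Q 1 1).eval 0 ∧ (Q 0 1).eval 0 = -(Q 1 0).eval 0 := by
    have h0 := (eq_fromBlocks12_iff.1 (hax 0)).2.2.2
    rw [zero_pow two_ne_zero, show ![(0 : ℝ), 0] = 0 by simp] at h0
    obtain ⟨h11, h12⟩ := hL.apply_zero_succ_succ
    exact ⟨(h0 0 0).symm.trans (h11.trans (h0 1 1)),
      (h0 0 1).symm.trans (h12.trans (congrArg _ (h0 1 0)))⟩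
  refine ⟨σ, r 0, -r 1, c 0, -c 1, Q 1 1, (Q 0 0 - Q 1 1).divX, -Q 1 0, -(Q 0 1 + Q 1 0).divX,
    hL.eq_of_forall_axis (isRotationInvariant_acousticSymbol _ _ _ _ _ _ _ _ _) fun t => ?_⟩
  rw [hax t, acousticSymbol]
  congr 1
  · simp [sq2]
  · ext j; fin_cases j <;> simp [sq2, perp2, mul_comm]
  · ext i; fin_cases i <;> simp [sq2, perp2, mul_comm]
  · have hz := eval_eq_mul_eval_divX_add_eval_zero (Q 0 0 - Q 1 1) (t ^ 2)
    have hh := eval_eq_mul_eval_divX_add_eval_zero (Q 0 1 + Q 1 0) (t ^ 2)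
    rw [eval_sub, eval_sub, hQ0.1, sub_self, add_zero] at hz
    rw [eval_add, eval_add, hQ0.2, neg_add_cancel, add_zero] at hh
    have hQ00 : (Q 0 0).eval (t ^ 2) = (Q 1 1).eval (t ^ 2)
        + (Q 0 0 - Q 1 1).divX.eval (t ^ 2) * (t * t) := by linear_combination hz
    have hQ01 : (Q 0 1).eval (t ^ 2) = -(Q 1 0).eval (t ^ 2)
        + (Q 0 1 + Q 1 0).divX.eval (t ^ 2) * (t * t) := by linear_combination hh
    ext i j
    fin_cases i <;> fin_cases j <;> simp [sq2, perp2, J0mat, hQ00, hQ01]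

end IsRotationInvariant

/-- the 3×3-matrix-valued polynomial Fourier symbol
`L(k) = [[σ(k), r(k)ᵀ], [c(k), Q(k)]]` of a linear acoustic-type system in two
space dimensions satisfies `L(Rk) = diag(1,R) L(k) diag(1,R)ᵀ` for all `R ∈ SO(2)`
iff there are one-variable polynomials `a, b, c₁, d, e, m, z, n, h` with
`σ(k) = a(s(k))`, `r(k) = b(s(k)) k + c₁(s(k)) k^⊥`, `c(k) = d(s(k)) k + e(s(k)) k^⊥`,
`Q(k) = m(s(k)) I₂ + z(s(k)) k kᵀ + n(s(k)) J₀ + h(s(k)) k (k^⊥)ᵀ`. -/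
theorem rotation_invariant_acoustic_symbol_2d
    (L : (Fin 2 → ℝ) → Matrix (Fin 3) (Fin 3) ℝ)
    (hL : ∃ P : Matrix (Fin 3) (Fin 3) (MvPolynomial (Fin 2) ℝ),
      ∀ (k : Fin 2 → ℝ) (i j : Fin 3), L k i j = MvPolynomial.eval k (P i j)) :
    (∀ R : Matrix (Fin 2) (Fin 2) ℝ, Rᵀ * R = 1 → R.det = 1 →
      ∀ k : Fin 2 → ℝ, L (R.mulVec k) = diag1R2 R * L k * (diag1R2 R)ᵀ)
    ↔ ∃ a b c₁ d e m z n h : Polynomial ℝ, ∀ k : Fin 2 → ℝ,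
        L k 0 0 = Polynomial.eval (sq2 k) a
        ∧ (∀ i : Fin 2, L k 0 i.succ =
            Polynomial.eval (sq2 k) b * k i + Polynomial.eval (sq2 k) c₁ * perp2 k i)
        ∧ (∀ i : Fin 2, L k i.succ 0 =
            Polynomial.eval (sq2 k) d * k i + Polynomial.eval (sq2 k) e * perp2 k i)
        ∧ (∀ i j : Fin 2, L k i.succ j.succ =
            Polynomial.eval (sq2 k) m * (1 : Matrix (Fin 2) (Fin 2) ℝ) i j
            + Polynomial.eval (sq2 k) z * (k i * k j)
            + Polynomial.eval (sq2 k) n * J0mat i j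
            + Polynomial.eval (sq2 k) h * (k i * perp2 k j)) := by
  constructor
  · intro (hinv : IsRotationInvariant L)
    obtain ⟨a, b, c₁, d, e, m, z, n, h, hLeq⟩ := hinv.exists_eq_acousticSymbol hL
    exact ⟨a, b, c₁, d, e, m, z, n, h, fun k => eq_acousticSymbol_iff.1 (congrFun hLeq k)⟩
  · rintro ⟨a, b, c₁, d, e, m, z, n, h, hLk⟩
    obtain rfl : L = acousticSymbol a b c₁ d e m z n h :=
      funext fun k => eq_acousticSymbol_iff.2 (hLk k)
    exact isRotationInvariant_acousticSymbol a b c₁ d e m z n h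
end

section
/- Let L : ℝ³ → M₄(ℝ) be a polynomial map, written in block form L(k) = [[σ(k), r(k)ᵀ], [c(k), Q(k)]] with σ(k) ∈ ℝ, r(k), c(k) ∈ ℝ³ and Q(k) ∈ M₃(ℝ). Then L(Rk) = diag(1,R) · L(k) · diag(1,R)ᵀ for all R ∈ SO(3) and all k ∈ ℝ³ if and only if there exist one-variable real polynomials a, b, d, m, z, f such that for all k ∈ ℝ³: σ(k) = a(s(k)), r(k) = b(s(k)) k, c(k) = d(s(k)) k, and Q(k) = m(s(k)) I₃ + z(s(k)) k kᵀ + f(s(k)) [k]_×. (This is the Fourier-symbol form of the statement that a general linear acoustic-type partial differential system in three space dimensions, for a scalar density field ρ and a momentum vector field J, is invariant by rotation exactly when it has the form ∂_tρ + Σ_k(α_k Δ^k ρ + β_k div Δ^k J) = 0, ∂_t J + Σ_k(δ_k ∇Δ^k ρ + μ_k Δ^k J + η_k ∇div Δ^k J + φ_k curl Δ^k J) = 0 with finitely many nonzero real coefficients.) -/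
open Matrix

/-- The squared norm `s(k) = k_x² + k_y² + k_z²`. -/
def sq3 (k : Fin 3 → ℝ) : ℝ := k 0 ^ 2 + k 1 ^ 2 + k 2 ^ 2

/-- The antisymmetric matrix `[k]_×` of the cross product: `[k]_× w = k × w`. -/
def crossMat (k : Fin 3 → ℝ) : Matrix (Fin 3) (Fin 3) ℝ :=
  !![0, -k 2, k 1; k 2, 0, -k 0; -k 1, k 0, 0]

/-- The block-diagonal matrix `diag(1, R)` of size 4×4. -/
def diag1R3 (R : Matrix (Fin 3) (Fin 3) ℝ) : Matrix (Fin 4) (Fin 4) ℝ :=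
  !![1, 0, 0, 0;
     0, R 0 0, R 0 1, R 0 2;
     0, R 1 0, R 1 1, R 1 2;
     0, R 2 0, R 2 1, R 2 2]

/-!
Invariance under `diag(1, R)` splits along the blocks of `L`: `σ` is an `SO(3)`-invariant scalar
field, `r` and `c` are equivariant vector fields and `Q` is an equivariant matrix field. As
`SO(3)` is transitive on spheres, such a field is determined by its values on the axis `t e₀`.
There, the half and quarter turns about the axis force the normal form, the half turn reversing
the axis makes each coefficient even or odd in `t`, and an even (odd) polynomial in `t` is a
polynomial in `t²` (times `t`). A quarter turn moving the axis makes `Q 0` scalar, which is what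
makes the coefficient of `k kᵀ` a polynomial.
-/

open scoped Polynomial

namespace Polynomial

theorem coeff_comp_neg_X {R : Type*} [CommRing R] (p : R[X]) (n : ℕ) :
    (p.comp (-X)).coeff n = (-1) ^ n * p.coeff n := by
  rw [show (-X : R[X]) = C (-1) * X by simp, comp_C_mul_X_coeff, mul_comm]

variable {R : Type*} [Field R] [CharZero R]

theorem expand_contract_two_of_comp_neg_X {p : R[X]} (h : p.comp (-X) = p) :
    expand R 2 (contract 2 p) = p := by
  ext n
  rw [coeff_expand two_pos]
  split_ifs with hn
  · rw [coeff_contract two_ne_zero, Nat.div_mul_cancel hn]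
  · have hc := congrArg (coeff · n) h
    simp only [coeff_comp_neg_X, (Nat.odd_iff.mpr (Nat.two_dvd_ne_zero.mp hn)).neg_one_pow] at hc
    linear_combination hc / 2

theorem exists_eval_sq_of_eval_neg {p : R[X]} (h : ∀ t, p.eval (-t) = p.eval t) :
    ∃ q : R[X], ∀ t, p.eval t = q.eval (t ^ 2) := by
  have hp : p.comp (-X) = p := funext fun t => by simpa using h t
  exact ⟨contract 2 p, fun t => by rw [← expand_eval, expand_contract_two_of_comp_neg_X hp]⟩

theorem exists_mul_eval_sq_of_eval_neg {p : R[X]} (h : ∀ t, p.eval (-t) = -p.eval t) :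
    ∃ q : R[X], ∀ t, p.eval t = t * q.eval (t ^ 2) := by
  have h0 : p.coeff 0 = 0 := by
    have h00 := h 0
    rw [neg_zero] at h00
    rw [coeff_zero_eq_eval_zero]
    linear_combination h00 / 2
  have hp : ∀ t, p.eval t = t * p.divX.eval t := fun t => by
    simpa [h0] using congrArg (eval t) (X_mul_divX_add p).symm
  obtain ⟨q, hq⟩ := exists_eval_sq_of_eval_neg (p := p.divX) fun t => by
    rcases eq_or_ne t 0 with rfl | ht
    · rw [neg_zero]
    · have := h t
      rw [hp, hp] at this
      exact mul_left_cancel₀ (neg_ne_zero.mpr ht) (by linear_combination this)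
  exact ⟨q, fun t => by rw [hp, hq]⟩

end Polynomial

def IsPolynomialFun {ι R : Type*} [CommRing R] (g : (ι → R) → R) : Prop :=
  ∃ p : MvPolynomial ι R, ∀ x, g x = MvPolynomial.eval x p

theorem IsPolynomialFun.exists_eval_single {ι R : Type*} [CommRing R] [DecidableEq ι]
    {g : (ι → R) → R} (hg : IsPolynomialFun g) (i : ι) :
    ∃ q : R[X], ∀ t, g (Pi.single i t) = q.eval t := by
  obtain ⟨p, hp⟩ := hg
  refine ⟨MvPolynomial.aeval (Pi.single i Polynomial.X) p, fun t => ?_⟩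
  have hline : (fun j => Polynomial.aeval t ((Pi.single i Polynomial.X : ι → R[X]) j)) =
      Pi.single i t := by
    funext j
    rcases eq_or_ne j i with rfl | hj <;> simp [*]
  rw [hp, ← Polynomial.coe_aeval_eq_eval, ← AlgHom.comp_apply, MvPolynomial.comp_aeval, hline,
    MvPolynomial.aeval_eq_eval]

theorem vecMulVec_mulVec_mulVec {m n α : Type*} [Fintype n] [CommSemiring α] (R : Matrix m n α)
    (u v : n → α) : vecMulVec (R *ᵥ u) (R *ᵥ v) = R * vecMulVec u v * Rᵀ := by
  rw [mul_vecMulVec, vecMulVec_mul, vecMul_transpose]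

theorem diagonal_mul_mul_transpose_apply {n α : Type*} [Fintype n] [DecidableEq n] [Semiring α]
    (d : n → α) (W : Matrix n n α) (i j : n) :
    (diagonal d * W * (diagonal d)ᵀ) i j = d i * W i j * d j := by
  simp [diagonal_mul, mul_diagonal]

section OrthogonalGroup

variable {n : Type*} [Fintype n] [DecidableEq n]

theorem det_eq_one_or_neg_one_of_mem_orthogonalGroup {R : Matrix n n ℝ}
    (hR : R ∈ orthogonalGroup n ℝ) : R.det = 1 ∨ R.det = -1 := by
  have h := congrArg det ((mem_orthogonalGroup_iff' _ _).mp hR)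
  rw [det_mul, det_transpose, det_one] at h
  exact mul_self_eq_one_iff.mp h

theorem diagonal_mem_orthogonalGroup {d : n → ℝ} (hd : ∀ i, d i * d i = 1) :
    diagonal d ∈ orthogonalGroup n ℝ := by
  rw [mem_orthogonalGroup_iff', diagonal_transpose, diagonal_mul_diagonal, ← diagonal_one]
  exact congrArg diagonal (funext hd)

theorem diagonal_mem_specialOrthogonalGroup {d : n → ℝ} (hd : ∀ i, d i * d i = 1)
    (hdet : ∏ i, d i = 1) : diagonal d ∈ specialOrthogonalGroup n ℝ :=
  mem_specialOrthogonalGroup_iff.mpr ⟨diagonal_mem_orthogonalGroup hd, by rwa [det_diagonal]⟩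

theorem forall_mem_specialOrthogonalGroup_iff {p : Matrix n n ℝ → Prop} :
    (∀ R : Matrix n n ℝ, Rᵀ * R = 1 → R.det = 1 → p R) ↔
      ∀ R ∈ specialOrthogonalGroup n ℝ, p R := by
  simp only [mem_specialOrthogonalGroup_iff, mem_orthogonalGroup_iff', and_imp]

theorem exists_mem_orthogonalGroup_mulVec_single (i : n) (k : n → ℝ) :
    ∃ R ∈ orthogonalGroup n ℝ, R *ᵥ Pi.single i √(∑ j, k j ^ 2) = k := by
  rcases eq_or_ne k 0 with rfl | hk
  · exact ⟨1, one_mem _, by simp⟩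
  have hnorm : ‖WithLp.toLp 2 k‖ = √(∑ j, k j ^ 2) := by simp [EuclideanSpace.norm_eq]
  have hnorm0 : ‖WithLp.toLp 2 k‖ ≠ 0 := by simpa using hk
  set u := ‖WithLp.toLp 2 k‖⁻¹ • WithLp.toLp 2 k
  have hu : Orthonormal ℝ (({i} : Set n).domRestrict fun _ => u) := by
    rw [orthonormal_iff_ite]
    rintro ⟨_, rfl⟩ ⟨_, rfl⟩
    rw [if_pos rfl, real_inner_self_eq_norm_sq]
    simp [u, norm_smul, hnorm0]
  obtain ⟨b, hb⟩ := hu.exists_orthonormalBasis_extension_of_card_eq (by simp)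
  refine ⟨(EuclideanSpace.basisFun n ℝ).toBasis.toMatrix b,
    (EuclideanSpace.basisFun n ℝ).toMatrix_orthonormalBasis_mem_orthogonal b, ?_⟩
  ext l
  simp [Module.Basis.toMatrix_apply, hb i rfl, u, ← hnorm, mul_right_comm _ (k l),
    inv_mul_cancel₀ hnorm0]

variable [Nontrivial n]

theorem exists_mem_specialOrthogonalGroup_mulVec_single (i : n) (k : n → ℝ) :
    ∃ R ∈ specialOrthogonalGroup n ℝ, R *ᵥ Pi.single i √(∑ j, k j ^ 2) = k := by
  obtain ⟨R, hR, hRk⟩ := exists_mem_orthogonalGroup_mulVec_single i k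
  rcases det_eq_one_or_neg_one_of_mem_orthogonalGroup hR with hdet | hdet
  · exact ⟨R, mem_specialOrthogonalGroup_iff.mpr ⟨hR, hdet⟩, hRk⟩
  -- flip the sign of a coordinate `j ≠ i`, which fixes `Pi.single i _`
  obtain ⟨j, hji⟩ := exists_ne i
  set d : n → ℝ := Function.update 1 j (-1)
  have hd : ∀ l, d l * d l = 1 := fun l => by
    rcases eq_or_ne l j with rfl | hl <;> simp [d, *]
  refine ⟨R * diagonal d, mem_specialOrthogonalGroup_iff.mpr
    ⟨mul_mem hR (diagonal_mem_orthogonalGroup hd), ?_⟩, ?_⟩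
  · simp [det_diagonal, hdet, d, Finset.prod_update_of_mem]
  · rw [← mulVec_mulVec, diagonal_mulVec_single]
    simpa [d, hji.symm] using hRk

theorem eq_of_equivariant_of_eq_on_axis {V : Type*} (i : n) (ρ : Matrix n n ℝ → V → V)
    {F G : (n → ℝ) → V}
    (hF : ∀ R ∈ specialOrthogonalGroup n ℝ, ∀ k, F (R *ᵥ k) = ρ R (F k))
    (hG : ∀ R ∈ specialOrthogonalGroup n ℝ, ∀ k, G (R *ᵥ k) = ρ R (G k))
    (hline : ∀ t, F (Pi.single i t) = G (Pi.single i t)) : F = G := by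
  funext k
  obtain ⟨R, hR, hRk⟩ := exists_mem_specialOrthogonalGroup_mulVec_single i k
  rw [← hRk, hF R hR, hG R hR, hline]

end OrthogonalGroup

theorem sq3_eq_dotProduct (k : Fin 3 → ℝ) : sq3 k = k ⬝ᵥ k := by
  simp [sq3, dotProduct, Fin.sum_univ_three, sq]

theorem sq3_single (t : ℝ) : sq3 (Pi.single 0 t) = t ^ 2 := by
  simp [sq3]

theorem sq3_mulVec {R : Matrix (Fin 3) (Fin 3) ℝ} (hR : R ∈ orthogonalGroup (Fin 3) ℝ)
    (k : Fin 3 → ℝ) : sq3 (R *ᵥ k) = sq3 k := by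
  rw [sq3_eq_dotProduct, sq3_eq_dotProduct, dotProduct_mulVec, ← mulVec_transpose, mulVec_mulVec,
    (mem_orthogonalGroup_iff' _ _).mp hR, one_mulVec]

theorem transpose_mul_crossMat_mulVec_mul (M : Matrix (Fin 3) (Fin 3) ℝ) (k : Fin 3 → ℝ) :
    Mᵀ * crossMat (M *ᵥ k) * M = M.det • crossMat k := by
  ext i j
  fin_cases i <;> fin_cases j <;>
    simp [crossMat, mul_apply, mulVec, dotProduct, det_fin_three, Fin.sum_univ_three] <;> ring

theorem crossMat_mulVec {R : Matrix (Fin 3) (Fin 3) ℝ}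
    (hR : R ∈ specialOrthogonalGroup (Fin 3) ℝ) (k : Fin 3 → ℝ) :
    crossMat (R *ᵥ k) = R * crossMat k * Rᵀ := by
  obtain ⟨hRo, hdet⟩ := mem_specialOrthogonalGroup_iff.mp hR
  have hRRt : R * Rᵀ = 1 := (mem_orthogonalGroup_iff _ _).mp hRo
  calc crossMat (R *ᵥ k) = (R * Rᵀ) * crossMat (R *ᵥ k) * (R * Rᵀ) := by
        rw [hRRt, Matrix.one_mul, Matrix.mul_one]
    _ = R * (Rᵀ * crossMat (R *ᵥ k) * R) * Rᵀ := by simp only [Matrix.mul_assoc]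
    _ = R * crossMat k * Rᵀ := by rw [transpose_mul_crossMat_mulVec_mul, hdet, one_smul]

def isotropicMatrix (m z f : ℝ[X]) (k : Fin 3 → ℝ) : Matrix (Fin 3) (Fin 3) ℝ :=
  m.eval (sq3 k) • 1 + z.eval (sq3 k) • vecMulVec k k + f.eval (sq3 k) • crossMat k

theorem isotropicMatrix_mulVec (m z f : ℝ[X]) {R : Matrix (Fin 3) (Fin 3) ℝ}
    (hR : R ∈ specialOrthogonalGroup (Fin 3) ℝ) (k : Fin 3 → ℝ) :
    isotropicMatrix m z f (R *ᵥ k) = R * isotropicMatrix m z f k * Rᵀ := by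
  have hRo := (mem_specialOrthogonalGroup_iff.mp hR).1
  have hRRt : R * Rᵀ = 1 := (mem_orthogonalGroup_iff _ _).mp hRo
  simp only [isotropicMatrix, sq3_mulVec hRo, vecMulVec_mulVec_mulVec, crossMat_mulVec hR,
    Matrix.mul_add, Matrix.add_mul, Matrix.mul_smul, Matrix.smul_mul, Matrix.mul_one, hRRt]

def halfTurnX : Matrix (Fin 3) (Fin 3) ℝ := diagonal ![1, -1, -1]
def halfTurnZ : Matrix (Fin 3) (Fin 3) ℝ := diagonal ![-1, -1, 1]
def quarterTurnX : Matrix (Fin 3) (Fin 3) ℝ := !![1, 0, 0; 0, 0, -1; 0, 1, 0]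
def quarterTurnZ : Matrix (Fin 3) (Fin 3) ℝ := !![0, -1, 0; 1, 0, 0; 0, 0, 1]

theorem halfTurnX_mem : halfTurnX ∈ specialOrthogonalGroup (Fin 3) ℝ :=
  diagonal_mem_specialOrthogonalGroup (by simp [Fin.forall_fin_succ])
    (by simp [Fin.prod_univ_three])

theorem halfTurnZ_mem : halfTurnZ ∈ specialOrthogonalGroup (Fin 3) ℝ :=
  diagonal_mem_specialOrthogonalGroup (by simp [Fin.forall_fin_succ])
    (by simp [Fin.prod_univ_three])

theorem quarterTurnX_mem : quarterTurnX ∈ specialOrthogonalGroup (Fin 3) ℝ := by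
  refine mem_specialOrthogonalGroup_iff.mpr ⟨(mem_orthogonalGroup_iff' _ _).mpr ?_, ?_⟩
  · ext i j
    fin_cases i <;> fin_cases j <;> simp [quarterTurnX, mul_apply, Fin.sum_univ_three]
  · simp [quarterTurnX, det_fin_three]

theorem quarterTurnZ_mem : quarterTurnZ ∈ specialOrthogonalGroup (Fin 3) ℝ := by
  refine mem_specialOrthogonalGroup_iff.mpr ⟨(mem_orthogonalGroup_iff' _ _).mpr ?_, ?_⟩
  · ext i j
    fin_cases i <;> fin_cases j <;> simp [quarterTurnZ, mul_apply, Fin.sum_univ_three]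
  · simp [quarterTurnZ, det_fin_three]

theorem halfTurnX_mulVec_single (t : ℝ) : halfTurnX *ᵥ Pi.single 0 t = Pi.single 0 t := by
  rw [halfTurnX, diagonal_mulVec_single]
  simp

theorem halfTurnZ_mulVec_single (t : ℝ) : halfTurnZ *ᵥ Pi.single 0 t = Pi.single 0 (-t) := by
  rw [halfTurnZ, diagonal_mulVec_single]
  simp

theorem quarterTurnX_mulVec_single (t : ℝ) : quarterTurnX *ᵥ Pi.single 0 t = Pi.single 0 t := by
  ext i
  fin_cases i <;> simp [quarterTurnX]

theorem invariant_iff_exists_eq_eval_sq3 {σ : (Fin 3 → ℝ) → ℝ} (hσ : IsPolynomialFun σ) :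
    (∀ R ∈ specialOrthogonalGroup (Fin 3) ℝ, ∀ k, σ (R *ᵥ k) = σ k) ↔
      ∃ a : ℝ[X], ∀ k, σ k = a.eval (sq3 k) := by
  have hform (a : ℝ[X]) : ∀ R ∈ specialOrthogonalGroup (Fin 3) ℝ, ∀ k,
      a.eval (sq3 (R *ᵥ k)) = a.eval (sq3 k) := fun R hR k => by
    rw [sq3_mulVec (mem_specialOrthogonalGroup_iff.mp hR).1]
  refine ⟨fun h => ?_, fun ⟨a, ha⟩ R hR k => by rw [ha, ha, hform a R hR]⟩
  obtain ⟨q, hq⟩ := hσ.exists_eval_single 0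
  obtain ⟨a, ha⟩ := Polynomial.exists_eval_sq_of_eval_neg (p := q) fun t => by
    rw [← hq, ← hq, ← halfTurnZ_mulVec_single, h _ halfTurnZ_mem]
  refine ⟨a, congrFun (eq_of_equivariant_of_eq_on_axis 0 (fun _ => id) h (hform a) fun t => ?_)⟩
  rw [hq, ha, sq3_single]

theorem exists_eq_smul_on_axis {v : (Fin 3 → ℝ) → Fin 3 → ℝ}
    (hv : ∀ i, IsPolynomialFun fun k => v k i)
    (h : ∀ R ∈ specialOrthogonalGroup (Fin 3) ℝ, ∀ k, v (R *ᵥ k) = R *ᵥ v k) :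
    ∃ b : ℝ[X], ∀ t, v (Pi.single 0 t) = b.eval (sq3 (Pi.single 0 t)) • Pi.single 0 t := by
  obtain ⟨q, hq⟩ := (hv 0).exists_eval_single 0
  obtain ⟨b, hb⟩ := Polynomial.exists_mul_eval_sq_of_eval_neg (p := q) fun t => by
    have := congrFun (h _ halfTurnZ_mem (Pi.single 0 t)) 0
    rw [halfTurnZ_mulVec_single, halfTurnZ, mulVec_diagonal] at this
    simpa [← hq] using this
  refine ⟨b, fun t => ?_⟩
  have hfix := h _ halfTurnX_mem (Pi.single 0 t)
  rw [halfTurnX_mulVec_single, halfTurnX] at hfix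
  ext i
  rw [Pi.smul_apply, smul_eq_mul]
  by_cases hi : i = 0
  · subst hi
    rw [hq, hb, sq3_single, Pi.single_eq_same, mul_comm]
  · have hdi : ![(1 : ℝ), -1, -1] i = -1 := by fin_cases i <;> simp_all
    have := congrFun hfix i
    rw [mulVec_diagonal, hdi] at this
    rw [Pi.single_eq_of_ne hi, mul_zero]
    linarith

theorem equivariant_iff_exists_eq_smul {v : (Fin 3 → ℝ) → Fin 3 → ℝ}
    (hv : ∀ i, IsPolynomialFun fun k => v k i) :
    (∀ R ∈ specialOrthogonalGroup (Fin 3) ℝ, ∀ k, v (R *ᵥ k) = R *ᵥ v k) ↔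
      ∃ b : ℝ[X], ∀ k, v k = b.eval (sq3 k) • k := by
  have hform (b : ℝ[X]) : ∀ R ∈ specialOrthogonalGroup (Fin 3) ℝ, ∀ k,
      b.eval (sq3 (R *ᵥ k)) • (R *ᵥ k) = R *ᵥ (b.eval (sq3 k) • k) := fun R hR k => by
    rw [sq3_mulVec (mem_specialOrthogonalGroup_iff.mp hR).1, mulVec_smul]
  refine ⟨fun h => ?_, fun ⟨b, hb⟩ R hR k => by rw [hb, hb, hform b R hR]⟩
  obtain ⟨b, hb⟩ := exists_eq_smul_on_axis hv h
  exact ⟨b, congrFun (eq_of_equivariant_of_eq_on_axis 0 (fun R w => R *ᵥ w) h (hform b) hb)⟩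

theorem eq_of_conj_halfTurnX_of_conj_quarterTurnX {W : Matrix (Fin 3) (Fin 3) ℝ}
    (hX : halfTurnX * W * halfTurnXᵀ = W) (hJ : quarterTurnX * W * quarterTurnXᵀ = W) :
    W = !![W 0 0, 0, 0; 0, W 1 1, -W 2 1; 0, W 2 1, W 1 1] := by
  have hX' (i j : Fin 3) := congrFun (congrFun hX i) j
  have hJ' (i j : Fin 3) := congrFun (congrFun hJ i) j
  simp only [halfTurnX, diagonal_mul_mul_transpose_apply] at hX'
  simp only [quarterTurnX, mul_apply, transpose_apply, Fin.sum_univ_three] at hJ'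
  have h01 : W 0 1 = 0 := by simpa [self_eq_neg] using (hX' 0 1).symm
  have h02 : W 0 2 = 0 := by simpa [self_eq_neg] using (hX' 0 2).symm
  have h10 : W 1 0 = 0 := by simpa [self_eq_neg] using (hX' 1 0).symm
  have h20 : W 2 0 = 0 := by simpa [self_eq_neg] using (hX' 2 0).symm
  have h22 : W 2 2 = W 1 1 := by simpa using hJ' 1 1
  have h12 : W 1 2 = -W 2 1 := by simpa using (hJ' 1 2).symm
  ext i j
  fin_cases i <;> fin_cases j <;> simp [h01, h02, h10, h20, h22, h12]

theorem isotropicMatrix_single (m z f : ℝ[X]) (t : ℝ) :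
    isotropicMatrix m z f (Pi.single 0 t) =
      !![m.eval (t ^ 2) + t ^ 2 * z.eval (t ^ 2), 0, 0;
        0, m.eval (t ^ 2), -(t * f.eval (t ^ 2));
        0, t * f.eval (t ^ 2), m.eval (t ^ 2)] := by
  ext i j
  fin_cases i <;> fin_cases j <;>
    simp [isotropicMatrix, crossMat, sq3_single, vecMulVec_apply] <;> ring

theorem exists_eq_isotropicMatrix_on_axis {Q : (Fin 3 → ℝ) → Matrix (Fin 3) (Fin 3) ℝ}
    (hQ : ∀ i j, IsPolynomialFun fun k => Q k i j)
    (h : ∀ R ∈ specialOrthogonalGroup (Fin 3) ℝ, ∀ k, Q (R *ᵥ k) = R * Q k * Rᵀ) :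
    ∃ m z f : ℝ[X], ∀ t, Q (Pi.single 0 t) = isotropicMatrix m z f (Pi.single 0 t) := by
  have hZ (t : ℝ) (i j : Fin 3) : Q (Pi.single 0 (-t)) i j =
      ![-1, -1, 1] i * Q (Pi.single 0 t) i j * ![-1, -1, 1] j := by
    rw [← halfTurnZ_mulVec_single, h _ halfTurnZ_mem, halfTurnZ, diagonal_mul_mul_transpose_apply]
  obtain ⟨qα, hqα⟩ := (hQ 0 0).exists_eval_single 0
  obtain ⟨qβ, hqβ⟩ := (hQ 1 1).exists_eval_single 0
  obtain ⟨qγ, hqγ⟩ := (hQ 2 1).exists_eval_single 0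
  obtain ⟨a, ha⟩ := Polynomial.exists_eval_sq_of_eval_neg (p := qα) fun t => by
    simpa [hqα] using hZ t 0 0
  obtain ⟨m, hm⟩ := Polynomial.exists_eval_sq_of_eval_neg (p := qβ) fun t => by
    simpa [hqβ] using hZ t 1 1
  obtain ⟨f, hf⟩ := Polynomial.exists_mul_eval_sq_of_eval_neg (p := qγ) fun t => by
    simpa [hqγ] using hZ t 2 1
  have h0 : a.eval 0 = m.eval 0 := by
    have hrot : Q 0 0 0 = Q 0 1 1 := by
      simpa [quarterTurnZ, mul_apply, Fin.sum_univ_three, vecMul, dotProduct] using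
        congrFun (congrFun (h _ quarterTurnZ_mem 0) 0) 0
    have hα0 := hqα 0
    have hβ0 := hqβ 0
    rw [Pi.single_zero, ha, zero_pow two_ne_zero] at hα0
    rw [Pi.single_zero, hm, zero_pow two_ne_zero] at hβ0
    rw [← hα0, ← hβ0, hrot]
  obtain ⟨z, hz⟩ : Polynomial.X ∣ a - m :=
    Polynomial.X_dvd_iff.mpr (by simp [Polynomial.coeff_zero_eq_eval_zero, h0])
  refine ⟨m, z, f, fun t => ?_⟩
  have hα : a.eval (t ^ 2) = m.eval (t ^ 2) + t ^ 2 * z.eval (t ^ 2) := by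
    have := congrArg (Polynomial.eval (t ^ 2)) hz
    simp only [Polynomial.eval_sub, Polynomial.eval_mul, Polynomial.eval_X] at this
    linarith
  have hshape := eq_of_conj_halfTurnX_of_conj_quarterTurnX (W := Q (Pi.single 0 t))
    (by rw [← h _ halfTurnX_mem, halfTurnX_mulVec_single])
    (by rw [← h _ quarterTurnX_mem, quarterTurnX_mulVec_single])
  rw [hshape, isotropicMatrix_single, hqα, hqβ, hqγ, ha, hm, hf, hα]

theorem equivariant_iff_exists_eq_isotropicMatrix {Q : (Fin 3 → ℝ) → Matrix (Fin 3) (Fin 3) ℝ}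
    (hQ : ∀ i j, IsPolynomialFun fun k => Q k i j) :
    (∀ R ∈ specialOrthogonalGroup (Fin 3) ℝ, ∀ k, Q (R *ᵥ k) = R * Q k * Rᵀ) ↔
      ∃ m z f : ℝ[X], ∀ k, Q k = isotropicMatrix m z f k := by
  refine ⟨fun h => ?_, fun ⟨m, z, f, hQ⟩ R hR k => by
    rw [hQ, hQ, isotropicMatrix_mulVec m z f hR]⟩
  obtain ⟨m, z, f, hline⟩ := exists_eq_isotropicMatrix_on_axis hQ h
  exact ⟨m, z, f, congrFun (eq_of_equivariant_of_eq_on_axis 0 (fun R W => R * W * Rᵀ) h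
    (fun R hR => isotropicMatrix_mulVec m z f hR) hline)⟩

section Diag1R3

variable (R : Matrix (Fin 3) (Fin 3) ℝ) (M : Matrix (Fin 4) (Fin 4) ℝ)

theorem diag1R3_conj_apply_zero_zero : (diag1R3 R * M * (diag1R3 R)ᵀ) 0 0 = M 0 0 := by
  simp [diag1R3, mul_apply, vecMul, dotProduct, Fin.sum_univ_four]

theorem diag1R3_conj_apply_zero_succ (j : Fin 3) :
    (diag1R3 R * M * (diag1R3 R)ᵀ) 0 j.succ = (R *ᵥ fun l => M 0 l.succ) j := by
  fin_cases j <;> simp [diag1R3, mul_apply, mulVec, vecMul, dotProduct, Fin.sum_univ_four,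
    Fin.sum_univ_three] <;> ring

theorem diag1R3_conj_apply_succ_zero (i : Fin 3) :
    (diag1R3 R * M * (diag1R3 R)ᵀ) i.succ 0 = (R *ᵥ fun l => M l.succ 0) i := by
  fin_cases i <;> simp [diag1R3, mul_apply, mulVec, vecMul, dotProduct, Fin.sum_univ_four,
    Fin.sum_univ_three]

theorem diag1R3_conj_apply_succ_succ (i j : Fin 3) :
    (diag1R3 R * M * (diag1R3 R)ᵀ) i.succ j.succ =
      (R * M.submatrix Fin.succ Fin.succ * Rᵀ) i j := by
  fin_cases i <;> fin_cases j <;> simp [diag1R3, mul_apply, vecMul, dotProduct, Fin.sum_univ_four,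
    Fin.sum_univ_three]

end Diag1R3

theorem eq_diag1R3_conj_iff {R : Matrix (Fin 3) (Fin 3) ℝ} {M N : Matrix (Fin 4) (Fin 4) ℝ} :
    N = diag1R3 R * M * (diag1R3 R)ᵀ ↔
      N 0 0 = M 0 0 ∧ (fun j => N 0 j.succ) = (R *ᵥ fun j => M 0 j.succ) ∧
        (fun i => N i.succ 0) = (R *ᵥ fun i => M i.succ 0) ∧
        N.submatrix Fin.succ Fin.succ = R * M.submatrix Fin.succ Fin.succ * Rᵀ := by
  constructor
  · rintro rfl
    exact ⟨diag1R3_conj_apply_zero_zero R M, funext (diag1R3_conj_apply_zero_succ R M),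
      funext (diag1R3_conj_apply_succ_zero R M), ext (diag1R3_conj_apply_succ_succ R M)⟩
  · rintro ⟨h00, h0s, hs0, hss⟩
    ext i j
    induction i using Fin.cases <;> induction j using Fin.cases
    · rw [h00, diag1R3_conj_apply_zero_zero]
    · rw [diag1R3_conj_apply_zero_succ, ← h0s]
    · rw [diag1R3_conj_apply_succ_zero, ← hs0]
    · rw [diag1R3_conj_apply_succ_succ, ← hss, submatrix_apply]

/-- the 4×4-matrix-valued polynomial Fourier symbol
`L(k) = [[σ(k), r(k)ᵀ], [c(k), Q(k)]]` of a linear acoustic-type system in three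
space dimensions satisfies `L(Rk) = diag(1,R) L(k) diag(1,R)ᵀ` for all `R ∈ SO(3)`
iff there are one-variable polynomials `a, b, d, m, z, f` with `σ(k) = a(s(k))`,
`r(k) = b(s(k)) k`, `c(k) = d(s(k)) k`, and `Q(k) = m(s(k)) I₃ + z(s(k)) k kᵀ + f(s(k)) [k]_×`. -/
theorem rotation_invariant_acoustic_symbol_3d
    (L : (Fin 3 → ℝ) → Matrix (Fin 4) (Fin 4) ℝ)
    (hL : ∃ P : Matrix (Fin 4) (Fin 4) (MvPolynomial (Fin 3) ℝ),
      ∀ (k : Fin 3 → ℝ) (i j : Fin 4), L k i j = MvPolynomial.eval k (P i j)) :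
    (∀ R : Matrix (Fin 3) (Fin 3) ℝ, Rᵀ * R = 1 → R.det = 1 →
      ∀ k : Fin 3 → ℝ, L (R.mulVec k) = diag1R3 R * L k * (diag1R3 R)ᵀ)
    ↔ ∃ a b d m z f : Polynomial ℝ, ∀ k : Fin 3 → ℝ,
        L k 0 0 = Polynomial.eval (sq3 k) a
        ∧ (∀ i : Fin 3, L k 0 i.succ = Polynomial.eval (sq3 k) b * k i)
        ∧ (∀ i : Fin 3, L k i.succ 0 = Polynomial.eval (sq3 k) d * k i)
        ∧ (∀ i j : Fin 3, L k i.succ j.succ =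
            Polynomial.eval (sq3 k) m * (1 : Matrix (Fin 3) (Fin 3) ℝ) i j
            + Polynomial.eval (sq3 k) z * (k i * k j)
            + Polynomial.eval (sq3 k) f * crossMat k i j) := by
  obtain ⟨P, hP⟩ := hL
  have hpoly (i j : Fin 4) : IsPolynomialFun fun k => L k i j := ⟨P i j, fun k => hP k i j⟩
  simp only [eq_diag1R3_conj_iff, forall_and, forall_mem_specialOrthogonalGroup_iff]
  rw [invariant_iff_exists_eq_eval_sq3 (hpoly 0 0),
    equivariant_iff_exists_eq_smul fun j => hpoly 0 j.succ,
    equivariant_iff_exists_eq_smul fun i => hpoly i.succ 0,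
    equivariant_iff_exists_eq_isotropicMatrix (Q := fun k => (L k).submatrix Fin.succ Fin.succ)
      fun i j => hpoly i.succ j.succ]
  simp only [funext_iff, ← Matrix.ext_iff, submatrix_apply, isotropicMatrix, Matrix.add_apply,
    Matrix.smul_apply, Pi.smul_apply, smul_eq_mul, vecMulVec_apply, exists_and_left,
    exists_and_right]
end

section
/- Let p ∈ ℝ[X, Y, Z] be a real polynomial in three variables. Then p(Rk) = p(k) for all R ∈ SO(3) and all k ∈ ℝ³ if and only if there exists a one-variable real polynomial u such that p(k) = u(s(k)) for all k ∈ ℝ³, i.e. p is a polynomial in X² + Y² + Z². -/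
/-!
Two plane rotations carry any `k` to `(√(s k), 0, 0)`, so a rotation-invariant `p` satisfies
`p(k) = f(√(s k))` with `f(t) = p(t, 0, 0)`. Since `(t, 0, 0)` and `(-t, 0, 0)` have the same
norm, `f` is even, so its odd coefficients vanish and `f(t) = u(t²)`. Conversely, orthogonal matrices
preserve `s`.
-/

open Matrix

namespace Polynomial

theorem expand_contract_two_of_comp_neg_X_s5 {R : Type*} [CommRing R] [IsAddTorsionFree R]
    {f : R[X]} (hf : f.comp (-X) = f) : expand R 2 (contract 2 f) = f := by
  ext n
  rw [coeff_expand two_pos, coeff_contract two_ne_zero]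
  split_ifs with hn
  · rw [Nat.div_mul_cancel hn]
  · have hcoeff : f.coeff n = f.coeff n * (-1) ^ n := by
      simpa [hf] using comp_C_mul_X_coeff (p := f) (r := -1) (n := n)
    rw [Odd.neg_one_pow (Nat.odd_iff.2 (Nat.two_dvd_ne_zero.1 hn)), mul_neg_one] at hcoeff
    exact (self_eq_neg.1 hcoeff).symm

theorem eval_mvPolynomial_aeval {R σ : Type*} [CommRing R] (g : σ → R[X])
    (p : MvPolynomial σ R) (t : R) :
    (MvPolynomial.aeval g p).eval t = MvPolynomial.eval (fun i => (g i).eval t) p := by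
  rw [← coe_aeval_eq_eval, ← AlgHom.comp_apply, MvPolynomial.comp_aeval]
  rfl

end Polynomial

theorem Matrix.mulVec_dotProduct_mulVec_of_transpose_mul_self {n R : Type*} [Fintype n]
    [DecidableEq n] [CommRing R] {A : Matrix n n R} (hA : Aᵀ * A = 1) (v : n → R) :
    A *ᵥ v ⬝ᵥ A *ᵥ v = v ⬝ᵥ v := by
  rw [dotProduct_mulVec, ← vecMul_transpose, vecMul_vecMul, hA, vecMul_one]

theorem dotProduct_self_fin_three {R : Type*} [CommRing R] (k : Fin 3 → R) :
    k ⬝ᵥ k = k 0 ^ 2 + k 1 ^ 2 + k 2 ^ 2 := by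
  simp [dotProduct, Fin.sum_univ_three, sq]

theorem exists_planar_rotation_to_axis (a b : ℝ) :
    ∃ c s : ℝ, c ^ 2 + s ^ 2 = 1 ∧ c * a + s * b = √(a ^ 2 + b ^ 2) ∧ c * b - s * a = 0 := by
  rcases eq_or_ne (√(a ^ 2 + b ^ 2)) 0 with hρ | hρ
  · rw [Real.sqrt_eq_zero (by positivity), add_eq_zero_iff_of_nonneg (sq_nonneg a) (sq_nonneg b),
      sq_eq_zero_iff, sq_eq_zero_iff] at hρ
    obtain ⟨rfl, rfl⟩ := hρ
    exact ⟨1, 0, by norm_num, by simp, by simp⟩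
  · have hρ2 : √(a ^ 2 + b ^ 2) ^ 2 = a ^ 2 + b ^ 2 := Real.sq_sqrt (by positivity)
    refine ⟨a / √(a ^ 2 + b ^ 2), b / √(a ^ 2 + b ^ 2), ?_, ?_, ?_⟩
    · field_simp; linarith
    · field_simp; linarith
    · ring

section Rotations

variable {R : Type*} [CommRing R]

def rotXY (c s : R) : Matrix (Fin 3) (Fin 3) R := !![c, s, 0; -s, c, 0; 0, 0, 1]

def rotXZ (c s : R) : Matrix (Fin 3) (Fin 3) R := !![c, 0, s; 0, 1, 0; -s, 0, c]

variable {c s : R}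

theorem rotXY_transpose_mul_self (h : c ^ 2 + s ^ 2 = 1) : (rotXY c s)ᵀ * rotXY c s = 1 := by
  ext i j; fin_cases i <;> fin_cases j <;> simp [rotXY, mul_apply, Fin.sum_univ_three] <;>
    first | linear_combination h | ring

theorem det_rotXY (h : c ^ 2 + s ^ 2 = 1) : (rotXY c s).det = 1 := by
  simp [rotXY, det_fin_three]; linear_combination h

theorem rotXZ_transpose_mul_self (h : c ^ 2 + s ^ 2 = 1) : (rotXZ c s)ᵀ * rotXZ c s = 1 := by
  ext i j; fin_cases i <;> fin_cases j <;> simp [rotXZ, mul_apply, Fin.sum_univ_three] <;>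
    first | linear_combination h | ring

theorem det_rotXZ (h : c ^ 2 + s ^ 2 = 1) : (rotXZ c s).det = 1 := by
  simp [rotXZ, det_fin_three]; linear_combination h

theorem rotXY_mulVec (k : Fin 3 → R) :
    rotXY c s *ᵥ k = ![c * k 0 + s * k 1, c * k 1 - s * k 0, k 2] := by
  ext i; fin_cases i <;> simp [rotXY, mulVec, dotProduct, Fin.sum_univ_three]; ring

theorem rotXZ_mulVec (k : Fin 3 → R) :
    rotXZ c s *ᵥ k = ![c * k 0 + s * k 2, k 1, c * k 2 - s * k 0] := by
  ext i; fin_cases i <;> simp [rotXZ, mulVec, dotProduct, Fin.sum_univ_three]; ring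

end Rotations

theorem apply_eq_apply_sqrt_of_rotation_invariant {α : Type*} (F : (Fin 3 → ℝ) → α)
    (hF : ∀ R : Matrix (Fin 3) (Fin 3) ℝ, Rᵀ * R = 1 → R.det = 1 → ∀ k, F (R *ᵥ k) = F k)
    (k : Fin 3 → ℝ) : F k = F ![√(k 0 ^ 2 + k 1 ^ 2 + k 2 ^ 2), 0, 0] := by
  obtain ⟨c, s, hcs, h0, h1⟩ := exists_planar_rotation_to_axis (k 0) (k 1)
  obtain ⟨c', s', hcs', h0', h1'⟩ := exists_planar_rotation_to_axis √(k 0 ^ 2 + k 1 ^ 2) (k 2)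
  rw [Real.sq_sqrt (by positivity)] at h0'
  calc F k = F (rotXY c s *ᵥ k) := (hF _ (rotXY_transpose_mul_self hcs) (det_rotXY hcs) k).symm
    _ = F ![√(k 0 ^ 2 + k 1 ^ 2), 0, k 2] := by rw [rotXY_mulVec, h0, h1]
    _ = F (rotXZ c' s' *ᵥ ![√(k 0 ^ 2 + k 1 ^ 2), 0, k 2]) :=
      (hF _ (rotXZ_transpose_mul_self hcs') (det_rotXZ hcs') _).symm
    _ = F ![√(k 0 ^ 2 + k 1 ^ 2 + k 2 ^ 2), 0, 0] := by
      rw [rotXZ_mulVec]; simp [h0', h1']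

open Polynomial in
/-- a three-variable real polynomial is invariant under all rotations
of space iff it is a polynomial in `X² + Y² + Z²`. -/
theorem rotation_invariant_poly_3d (p : MvPolynomial (Fin 3) ℝ) :
    (∀ R : Matrix (Fin 3) (Fin 3) ℝ, Rᵀ * R = 1 → R.det = 1 →
      ∀ k : Fin 3 → ℝ, MvPolynomial.eval (R.mulVec k) p = MvPolynomial.eval k p)
    ↔ ∃ u : Polynomial ℝ, ∀ k : Fin 3 → ℝ,
        MvPolynomial.eval k p = Polynomial.eval (k 0 ^ 2 + k 1 ^ 2 + k 2 ^ 2) u := by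
  constructor
  · intro h
    have radial := apply_eq_apply_sqrt_of_rotation_invariant (fun k => MvPolynomial.eval k p) h
    set f : ℝ[X] := MvPolynomial.aeval ![X, 0, 0] p
    have hf (t : ℝ) : f.eval t = MvPolynomial.eval ![t, 0, 0] p := by
      rw [eval_mvPolynomial_aeval]
      congr; ext i; fin_cases i <;> simp
    have heven : f.comp (-X) = f := Polynomial.funext fun t => by
      simp only [eval_comp, eval_neg, eval_X, hf]
      rw [radial ![-t, 0, 0], radial ![t, 0, 0]]
      simp
    have hf_sq (t : ℝ) : f.eval t = (contract 2 f).eval (t ^ 2) := by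
      rw [← expand_eval, expand_contract_two_of_comp_neg_X_s5 heven]
    refine ⟨contract 2 f, fun k => ?_⟩
    rw [radial k, ← hf, hf_sq, Real.sq_sqrt (by positivity)]
  · rintro ⟨u, hu⟩ R hR - k
    rw [hu, hu, ← dotProduct_self_fin_three, ← dotProduct_self_fin_three,
      mulVec_dotProduct_mulVec_of_transpose_mul_self hR]
end

section
/- There exists a unique pair of sequences (α_ℓ)_{ℓ≥1} of N×N matrices over R and (β_m)_{m≥0} of (q−N)×N matrices over R with β₀ = E satisfying the two formal power series identities X(t) = 𝔸(t) + 𝔅(t)·𝔹(t) and 𝔹(t)·X(t) = ℂ(t) + 𝔻(t)·𝔹(t) (the consistency identities expressing that the nonconserved moments of the lattice Boltzmann scheme expand as Y = 𝔹(Δt)·W and that the conserved moments W satisfy the equivalent partial differential equations ∂_t W = Σ_{ℓ≥1} Δt^{ℓ−1} α_ℓ W). Moreover, these sequences are given by the recursion: for every k ≥ 0, α_{k+1} = A_{k+1} + Σ_{j=1}^{k+1} B_j β_{k+1−j} − Σ_{j=2}^{k+1} (1/j!) Γ^j_{k+1}, and β_{k+1} = S⁻¹ · ( C_{k+1} + Σ_{j=1}^{k+1}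 D_j β_{k+1−j} − Σ_{j=1}^{k+1} (1/j!) K^j_{k+1} ). -/
/-- `seriesPow a j p` is the coefficient of `t^p` in `F(t)^j`,
where `F(t) = Σ_{ℓ≥0} t^ℓ a_ℓ` (in the application `a 0 = 0`, so that
`F(t) = Σ_{ℓ≥1} t^ℓ a_ℓ`). -/
def seriesPow {A : Type*} [Ring A] (a : ℕ → A) : ℕ → ℕ → A
  | 0, p => if p = 0 then 1 else 0
  | j + 1, p => ∑ ij ∈ Finset.HasAntidiagonal.antidiagonal p, a ij.1 * seriesPow a j ij.2

/-- `Xcoef α p` is the coefficient of `t^p` in `X(t) = Σ_{j≥0} (1/j!) F(t)^j`,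
where `F(t) = Σ_{ℓ≥1} t^ℓ α_ℓ` (encoded by `α 0 = 0`, so that the coefficient of
`t^p` in `F(t)^j` vanishes for `j > p`). -/
def Xcoef {n : Type*} [Fintype n] [DecidableEq n] {R : Type*} [CommRing R] [Algebra ℚ R]
    (α : ℕ → Matrix n n R) (p : ℕ) : Matrix n n R :=
  ∑ j ∈ Finset.range (p + 1), ((j.factorial : ℚ)⁻¹) • seriesPow α j p

/-- `Kcoef β α j p` is the coefficient of `t^p` in `𝔹(t)·F(t)^j`, where
`𝔹(t) = Σ_{m≥0} t^m β_m` and `F(t) = Σ_{ℓ≥1} t^ℓ α_ℓ` (encoded by `α 0 = 0`). -/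
def Kcoef {m n : Type*} [Fintype n] [DecidableEq n] {R : Type*} [CommRing R]
    (β : ℕ → Matrix m n R) (α : ℕ → Matrix n n R) (j p : ℕ) : Matrix m n R :=
  ∑ ij ∈ Finset.HasAntidiagonal.antidiagonal p, β ij.1 * seriesPow α j ij.2

/-!
Compare coefficients of `t^(k+1)`. In `X(t) = 𝔸(t) + 𝔅(t)𝔹(t)` the unknown `α_{k+1}` enters
only through the `j = 1` term of `X`, everything else involving `α_1, …, α_k` and
`β_0, …, β_k` (as `B_0 = 0` and, `F` having no constant term, `Γ^j_{k+1}` for `j ≥ 2` only sees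
`α_1, …, α_k`). In `𝔹(t)X(t) = ℂ(t) + 𝔻(t)𝔹(t)` the unknown `β_{k+1}` enters as
`β_{k+1} − D_0 β_{k+1} = S β_{k+1}`, everything else involving `α_1, …, α_{k+1}` and
`β_0, …, β_k`. Since `S` is invertible, the two identities are therefore equivalent to the
recursion of the statement, and a recursion of this triangular kind has exactly one solution
with `α_0 = 0`, `β_0 = E`.
-/

open Finset

theorem Finset.sum_range_succ_eq_add_sum_Icc {M : Type*} [AddCommMonoid M] (f : ℕ → M) (n : ℕ) :
    ∑ i ∈ range (n + 1), f i = f 0 + ∑ i ∈ Icc 1 n, f i := by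
  rw [sum_range_eq_add_Ico f n.succ_pos, Nat.succ_eq_add_one, Ico_add_one_right_eq_Icc]

namespace Finset.Nat

variable {M : Type*} [AddCommMonoid M] (f : ℕ → ℕ → M)

theorem sum_antidiagonal_succ_eq_add_sum_Icc (k : ℕ) :
    ∑ ij ∈ antidiagonal (k + 1), f ij.1 ij.2
      = f 0 (k + 1) + ∑ j ∈ Icc 1 (k + 1), f j (k + 1 - j) := by
  rw [sum_antidiagonal_eq_sum_range_succ, sum_range_succ_eq_add_sum_Icc, Nat.sub_zero]

theorem sum_antidiagonal_eq_apply_snd_zero (hf : ∀ i m, m ≠ 0 → f i m = 0) (p : ℕ) :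
    ∑ ij ∈ antidiagonal p, f ij.1 ij.2 = f p 0 := by
  refine sum_eq_single_of_mem (p, 0) (by simp) fun ij hij hne => hf _ _ fun h => hne ?_
  rw [HasAntidiagonal.mem_antidiagonal] at hij
  exact Prod.ext (by omega) h

end Finset.Nat

theorem Matrix.IsDiag.isUnit {n R : Type*} [Fintype n] [DecidableEq n] [CommRing R]
    {M : Matrix n n R} (hM : M.IsDiag) (hunit : ∀ i, IsUnit (M i i)) : IsUnit M :=
  hM.diagonal_diag ▸ isUnit_diagonal.2 (Pi.isUnit_iff.2 hunit)

theorem existsUnique_seq_of_causal {M : Type*} (x₀ : M) (Φ : (ℕ → M) → ℕ → M)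
    (hΦ : ∀ f g k, f 0 = x₀ → (∀ i ≤ k, f i = g i) → Φ f k = Φ g k) :
    ∃! f : ℕ → M, f 0 = x₀ ∧ ∀ k, f (k + 1) = Φ f k := by
  let step : (n : ℕ) → ((m : ℕ) → m < n → M) → M := fun n ih =>
    match n, ih with
    | 0, _ => x₀
    | k + 1, ih => Φ (fun i => if h : i < k + 1 then ih i h else x₀) k
  let f : ℕ → M := Nat.strongRec step
  have hf0 : f 0 = x₀ := Nat.strongRec_eq step 0
  have hf : ∀ k, f (k + 1) = Φ f k := fun k => by
    rw [show f (k + 1) = _ from Nat.strongRec_eq step (k + 1)]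
    exact hΦ _ _ _ hf0 fun i hi => dif_pos (Nat.lt_succ_of_le hi)
  refine ⟨f, ⟨hf0, hf⟩, fun g ⟨hg0, hg⟩ => funext fun n => ?_⟩
  induction n using Nat.strong_induction_on with
  | _ n ih =>
    cases n with
    | zero => exact hg0.trans hf0.symm
    | succ k => rw [hg k, hf k]; exact hΦ _ _ _ hg0 fun i hi => ih i (by omega)

theorem existsUnique_pair_seq_of_causal {M N : Type*} (x₀ : M) (y₀ : N)
    (F : (ℕ → M) → (ℕ → N) → ℕ → M) (G : (ℕ → M) → (ℕ → N) → ℕ → N)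
    (hF : ∀ f f' g g' k, f 0 = x₀ → (∀ i ≤ k, f i = f' i) → (∀ i ≤ k, g i = g' i) →
      F f g k = F f' g' k)
    (hG : ∀ f f' g g' k, f 0 = x₀ → (∀ i ≤ k + 1, f i = f' i) → (∀ i ≤ k, g i = g' i) →
      G f g k = G f' g' k) :
    ∃! fg : (ℕ → M) × (ℕ → N), fg.1 0 = x₀ ∧ fg.2 0 = y₀ ∧
      ∀ k, fg.1 (k + 1) = F fg.1 fg.2 k ∧ fg.2 (k + 1) = G fg.1 fg.2 k := by
  let e := Equiv.arrowProdEquivProdArrow ℕ (fun _ => M) (fun _ => N)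
  -- `G` may look at the term of index `k + 1` of the first sequence, which the step computes first.
  let Φ : (ℕ → M × N) → ℕ → M × N := fun h k =>
    (F (e h).1 (e h).2 k, G (Function.update (e h).1 (k + 1) (F (e h).1 (e h).2 k)) (e h).2 k)
  have hΦ : ∀ h h' k, h 0 = (x₀, y₀) → (∀ i ≤ k, h i = h' i) → Φ h k = Φ h' k := by
    intro h h' k h0 hhh'
    have hfst : ∀ i ≤ k, (h i).1 = (h' i).1 := fun i hi => congrArg Prod.fst (hhh' i hi)
    have hsnd : ∀ i ≤ k, (h i).2 = (h' i).2 := fun i hi => congrArg Prod.snd (hhh' i hi)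
    have ha : F (e h).1 (e h).2 k = F (e h').1 (e h').2 k :=
      hF _ _ _ _ k (congrArg Prod.fst h0) hfst hsnd
    refine Prod.ext ha (hG _ _ _ _ k ?_ (fun i hi => ?_) hsnd)
    · simp [Function.update, e, h0]
    rcases eq_or_lt_of_le hi with rfl | hi
    · simp [ha]
    · simp [Function.update, hi.ne, e, hfst i (by omega)]
  refine (e.existsUnique_congr fun h => ?_).1 (existsUnique_seq_of_causal (x₀, y₀) Φ hΦ)
  refine (and_congr Prod.ext_iff (forall_congr' fun k =>
    Prod.ext_iff.trans (and_congr_right fun ha => ?_))).trans and_assoc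
  change (e h).1 (k + 1) = F (e h).1 (e h).2 k at ha
  change (e h).2 (k + 1) = G (Function.update (e h).1 (k + 1) (F (e h).1 (e h).2 k)) (e h).2 k ↔ _
  rw [← ha, Function.update_eq_self]

section SeriesPow

variable {A : Type*} [Ring A] (a : ℕ → A)

theorem seriesPow_one (p : ℕ) : seriesPow a 1 p = a p := by
  rw [seriesPow, Nat.sum_antidiagonal_eq_apply_snd_zero (fun i m => a i * seriesPow a 0 m)
    fun i m hm => by simp [seriesPow, hm]]
  simp [seriesPow]

theorem seriesPow_eq_zero_of_lt (ha : a 0 = 0) : ∀ {j p : ℕ}, p < j → seriesPow a j p = 0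
  | j + 1, p, h => sum_eq_zero fun ⟨i, m⟩ hmem => by
    rw [HasAntidiagonal.mem_antidiagonal] at hmem
    rcases Nat.eq_zero_or_pos i with rfl | hi
    · rw [ha, zero_mul]
    · rw [seriesPow_eq_zero_of_lt ha (by omega : m < j), mul_zero]

variable {a}

theorem seriesPow_congr {b : ℕ → A} : ∀ {j p : ℕ}, (∀ i ≤ p, a i = b i) →
    seriesPow a j p = seriesPow b j p
  | 0, _, _ => rfl
  | j + 1, p, h => sum_congr rfl fun ⟨i, m⟩ hmem => by
    rw [HasAntidiagonal.mem_antidiagonal] at hmem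
    rw [h i (by omega), seriesPow_congr fun i' hi' => h i' (by omega)]

theorem seriesPow_succ_congr {b : ℕ → A} (ha : a 0 = 0) {k : ℕ} (h : ∀ i ≤ k, a i = b i)
    {j : ℕ} (hj : 2 ≤ j) : seriesPow a j (k + 1) = seriesPow b j (k + 1) := by
  obtain ⟨j, rfl⟩ : ∃ j', j = j' + 2 := ⟨j - 2, by omega⟩
  have hb : b 0 = 0 := (h 0 k.zero_le) ▸ ha
  refine sum_congr rfl fun ⟨i, m⟩ hmem => ?_
  rw [HasAntidiagonal.mem_antidiagonal] at hmem
  rcases Nat.eq_zero_or_pos i with rfl | hi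
  · rw [ha, hb, zero_mul, zero_mul]
  rcases Nat.eq_zero_or_pos m with rfl | hm
  · rw [seriesPow_eq_zero_of_lt a ha j.succ_pos, seriesPow_eq_zero_of_lt b hb j.succ_pos,
      mul_zero, mul_zero]
  · rw [h i (by omega), seriesPow_congr fun i' hi' => h i' (by omega)]

end SeriesPow

section Coefficients

variable {ι κ R : Type*} [Fintype ι] [DecidableEq ι] [CommRing R]

theorem Kcoef_zero (α : ℕ → Matrix ι ι R) (β : ℕ → Matrix κ ι R) (p : ℕ) :
    Kcoef β α 0 p = β p := by
  rw [Kcoef, Nat.sum_antidiagonal_eq_apply_snd_zero (fun i m => β i * seriesPow α 0 m)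
    fun i m hm => by simp [seriesPow, hm]]
  simp [seriesPow]

theorem Kcoef_succ_congr {α α' : ℕ → Matrix ι ι R} {β β' : ℕ → Matrix κ ι R} (hα : α 0 = 0)
    {k : ℕ} (hαα' : ∀ i ≤ k + 1, α i = α' i) (hββ' : ∀ i ≤ k, β i = β' i) {j : ℕ} (hj : 1 ≤ j) :
    Kcoef β α j (k + 1) = Kcoef β' α' j (k + 1) := by
  have hα' : α' 0 = 0 := hαα' 0 (by omega) ▸ hα
  refine sum_congr rfl fun ⟨i, m⟩ hmem => ?_
  rw [HasAntidiagonal.mem_antidiagonal] at hmem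
  rcases Nat.eq_zero_or_pos m with rfl | hm
  · rw [seriesPow_eq_zero_of_lt α hα hj, seriesPow_eq_zero_of_lt α' hα' hj,
      Matrix.mul_zero, Matrix.mul_zero]
  · rw [hββ' i (by omega), seriesPow_congr fun i' hi' => hαα' i' (by omega)]

variable [Algebra ℚ R] (α : ℕ → Matrix ι ι R)

theorem Xcoef_zero : Xcoef α 0 = 1 := by
  simp [Xcoef, seriesPow]

theorem Xcoef_succ (k : ℕ) :
    Xcoef α (k + 1) = α (k + 1)
      + ∑ j ∈ Icc 2 (k + 1), ((j.factorial : ℚ)⁻¹) • seriesPow α j (k + 1) := by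
  rw [Xcoef, sum_range_succ_eq_add_sum_Icc, ← Ico_add_one_right_eq_Icc,
    sum_eq_sum_Ico_succ_bot (by omega), Ico_add_one_right_eq_Icc, seriesPow_one]
  simp [seriesPow]

theorem Xcoef_eq_sum_range (hα : α 0 = 0) {p n : ℕ} (hpn : p ≤ n) :
    Xcoef α p = ∑ j ∈ range (n + 1), ((j.factorial : ℚ)⁻¹) • seriesPow α j p := by
  refine sum_subset (range_subset_range.2 (by omega)) fun j _ hj => ?_
  rw [seriesPow_eq_zero_of_lt α hα (by simpa using hj), smul_zero]

theorem sum_antidiagonal_mul_Xcoef (β : ℕ → Matrix κ ι R) (hα : α 0 = 0) (p : ℕ) :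
    ∑ ij ∈ antidiagonal p, β ij.1 * Xcoef α ij.2
      = ∑ j ∈ range (p + 1), ((j.factorial : ℚ)⁻¹) • Kcoef β α j p := by
  simp_rw [Kcoef, smul_sum]
  rw [sum_comm]
  refine sum_congr rfl fun ij hij => ?_
  rw [Xcoef_eq_sum_range α hα (HasAntidiagonal.antidiagonal.snd_le hij), Matrix.mul_sum]
  simp_rw [Matrix.mul_smul]

end Coefficients

section Recursion

variable {ι κ R : Type*} [Fintype ι] [DecidableEq ι] [Fintype κ] [CommRing R] [Algebra ℚ R]
  {A : ℕ → Matrix ι ι R} {B : ℕ → Matrix ι κ R} {C : ℕ → Matrix κ ι R} {D : ℕ → Matrix κ κ R}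
  {α α' : ℕ → Matrix ι ι R} {β β' : ℕ → Matrix κ ι R} {k : ℕ}

variable (A B) in
def alphaStep (α : ℕ → Matrix ι ι R) (β : ℕ → Matrix κ ι R) (k : ℕ) : Matrix ι ι R :=
  A (k + 1) + (∑ j ∈ Icc 1 (k + 1), B j * β (k + 1 - j))
    - ∑ j ∈ Icc 2 (k + 1), ((j.factorial : ℚ)⁻¹) • seriesPow α j (k + 1)

theorem alphaStep_congr (hα : α 0 = 0) (hαα' : ∀ i ≤ k, α i = α' i)
    (hββ' : ∀ i ≤ k, β i = β' i) : alphaStep A B α β k = alphaStep A B α' β' k := by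
  unfold alphaStep
  refine congr_arg₂ _ (congrArg _ (sum_congr rfl fun j hj => ?_)) (sum_congr rfl fun j hj => ?_)
  · rw [hββ' (k + 1 - j) (by grind)]
  · rw [seriesPow_succ_congr hα hαα' (mem_Icc.1 hj).1]

theorem Xcoef_succ_eq_iff (hB0 : B 0 = 0) :
    Xcoef α (k + 1) = A (k + 1) + ∑ ij ∈ antidiagonal (k + 1), B ij.1 * β ij.2
      ↔ α (k + 1) = alphaStep A B α β k := by
  rw [Xcoef_succ, Nat.sum_antidiagonal_succ_eq_add_sum_Icc (fun i j => B i * β j), hB0,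
    Matrix.zero_mul, zero_add, alphaStep, eq_sub_iff_add_eq]

variable [DecidableEq κ] {S : Matrix κ κ R}

variable (C D S) in
noncomputable def betaStep (α : ℕ → Matrix ι ι R) (β : ℕ → Matrix κ ι R) (k : ℕ) :
    Matrix κ ι R :=
  S⁻¹ * (C (k + 1) + (∑ j ∈ Icc 1 (k + 1), D j * β (k + 1 - j))
    - ∑ j ∈ Icc 1 (k + 1), ((j.factorial : ℚ)⁻¹) • Kcoef β α j (k + 1))

theorem betaStep_congr (hα : α 0 = 0) (hαα' : ∀ i ≤ k + 1, α i = α' i)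
    (hββ' : ∀ i ≤ k, β i = β' i) : betaStep C D S α β k = betaStep C D S α' β' k := by
  unfold betaStep
  refine congrArg _ (congr_arg₂ _ (congrArg _ (sum_congr rfl fun j hj => ?_))
    (sum_congr rfl fun j hj => ?_))
  · rw [hββ' (k + 1 - j) (by grind)]
  · rw [Kcoef_succ_congr hα hαα' hββ' (mem_Icc.1 hj).1]

theorem sum_mul_Xcoef_succ_eq_iff (hα : α 0 = 0) (hD0 : D 0 = 1 - S) (hS : IsUnit S) :
    ∑ ij ∈ antidiagonal (k + 1), β ij.1 * Xcoef α ij.2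
        = C (k + 1) + ∑ ij ∈ antidiagonal (k + 1), D ij.1 * β ij.2
      ↔ β (k + 1) = betaStep C D S α β k := by
  obtain ⟨_⟩ := hS.nonempty_invertible
  rw [betaStep, eq_comm (a := β (k + 1)), Matrix.inv_mul_eq_iff_eq_mul_of_invertible,
    sum_antidiagonal_mul_Xcoef α β hα, sum_range_succ_eq_add_sum_Icc, Kcoef_zero,
    Nat.sum_antidiagonal_succ_eq_add_sum_Icc (fun i j => D i * β j), hD0, Matrix.sub_mul,
    Matrix.one_mul, Nat.factorial_zero, Nat.cast_one, inv_one, one_smul]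
  constructor <;> intro h <;> linear_combination (norm := module) -h

end Recursion

section Consistency

variable {ι κ R : Type*} [Fintype ι] [DecidableEq ι] [Fintype κ] [DecidableEq κ] [CommRing R]
  [Algebra ℚ R] {A : ℕ → Matrix ι ι R} {B : ℕ → Matrix ι κ R} {C : ℕ → Matrix κ ι R}
  {D : ℕ → Matrix κ κ R} {E : Matrix κ ι R} {S : Matrix κ κ R}

theorem consistency_iff_recursion (hA0 : A 0 = 1) (hB0 : B 0 = 0) (hC0 : C 0 = S * E)
    (hD0 : D 0 = 1 - S) (hS : IsUnit S) {α : ℕ → Matrix ι ι R} {β : ℕ → Matrix κ ι R}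
    (hα : α 0 = 0) (hβ : β 0 = E) :
    ((∀ p, Xcoef α p = A p + ∑ ij ∈ antidiagonal p, B ij.1 * β ij.2) ∧
      ∀ p, ∑ ij ∈ antidiagonal p, β ij.1 * Xcoef α ij.2
        = C p + ∑ ij ∈ antidiagonal p, D ij.1 * β ij.2)
    ↔ ∀ k, α (k + 1) = alphaStep A B α β k ∧ β (k + 1) = betaStep C D S α β k := by
  have h₁ : Xcoef α 0 = A 0 + ∑ ij ∈ antidiagonal 0, B ij.1 * β ij.2 := by
    simp [Xcoef_zero, hA0, hB0]
  have h₂ : ∑ ij ∈ antidiagonal 0, β ij.1 * Xcoef α ij.2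
      = C 0 + ∑ ij ∈ antidiagonal 0, D ij.1 * β ij.2 := by
    simp [Xcoef_zero, hβ, hC0, hD0, Matrix.sub_mul]
  rw [← and_congr Nat.and_forall_add_one Nat.and_forall_add_one]
  simp only [h₁, h₂, true_and, Xcoef_succ_eq_iff hB0, sum_mul_Xcoef_succ_eq_iff hα hD0 hS,
    forall_and]

variable (A B C D E S) in
theorem existsUnique_recursion :
    ∃! ab : (ℕ → Matrix ι ι R) × (ℕ → Matrix κ ι R), ab.1 0 = 0 ∧ ab.2 0 = E ∧
      ∀ k, ab.1 (k + 1) = alphaStep A B ab.1 ab.2 k ∧ ab.2 (k + 1) = betaStep C D S ab.1 ab.2 k :=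
  existsUnique_pair_seq_of_causal 0 E (alphaStep A B) (betaStep C D S)
    (fun _ _ _ _ _ hα hαα' hββ' => alphaStep_congr hα hαα' hββ')
    (fun _ _ _ _ _ hα hαα' hββ' => betaStep_congr hα hαα' hββ')

end Consistency

theorem taylor_expansion_exists_unique_general (N q : ℕ)
    (R : Type*) [CommRing R] [Algebra ℚ R]
    (A : ℕ → Matrix (Fin N) (Fin N) R) (B : ℕ → Matrix (Fin N) (Fin (q - N)) R)
    (C : ℕ → Matrix (Fin (q - N)) (Fin N) R) (D : ℕ → Matrix (Fin (q - N)) (Fin (q - N)) R)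
    (E : Matrix (Fin (q - N)) (Fin N) R) (S : Matrix (Fin (q - N)) (Fin (q - N)) R)
    (hSdiag : S.IsDiag) (hSunit : ∀ i, IsUnit (S i i))
    (hA0 : A 0 = 1) (hB0 : B 0 = 0) (hC0 : C 0 = S * E) (hD0 : D 0 = 1 - S) :
    (∃! ab : (ℕ → Matrix (Fin N) (Fin N) R) × (ℕ → Matrix (Fin (q - N)) (Fin N) R),
      ab.1 0 = 0 ∧ ab.2 0 = E
      ∧ (∀ p : ℕ, Xcoef ab.1 p = A p + ∑ ij ∈ Finset.HasAntidiagonal.antidiagonal p, B ij.1 * ab.2 ij.2)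
      ∧ (∀ p : ℕ, ∑ ij ∈ Finset.HasAntidiagonal.antidiagonal p, ab.2 ij.1 * Xcoef ab.1 ij.2
          = C p + ∑ ij ∈ Finset.HasAntidiagonal.antidiagonal p, D ij.1 * ab.2 ij.2))
    ∧ (∀ (α : ℕ → Matrix (Fin N) (Fin N) R) (β : ℕ → Matrix (Fin (q - N)) (Fin N) R),
        α 0 = 0 → β 0 = E →
        (∀ p : ℕ, Xcoef α p = A p + ∑ ij ∈ Finset.HasAntidiagonal.antidiagonal p, B ij.1 * β ij.2) →
        (∀ p : ℕ, ∑ ij ∈ Finset.HasAntidiagonal.antidiagonal p, β ij.1 * Xcoef α ij.2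
            = C p + ∑ ij ∈ Finset.HasAntidiagonal.antidiagonal p, D ij.1 * β ij.2) →
        ∀ k : ℕ,
          α (k + 1) = A (k + 1) + (∑ j ∈ Finset.Icc 1 (k + 1), B j * β (k + 1 - j))
              - ∑ j ∈ Finset.Icc 2 (k + 1), ((j.factorial : ℚ)⁻¹) • seriesPow α j (k + 1)
          ∧ β (k + 1) = S⁻¹ * (C (k + 1) + (∑ j ∈ Finset.Icc 1 (k + 1), D j * β (k + 1 - j))
              - ∑ j ∈ Finset.Icc 1 (k + 1), ((j.factorial : ℚ)⁻¹) • Kcoef β α j (k + 1))) := by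
  have hS : IsUnit S := hSdiag.isUnit hSunit
  refine ⟨(existsUnique_congr fun ab => and_congr_right fun hα => and_congr_right fun hβ =>
      consistency_iff_recursion hA0 hB0 hC0 hD0 hS hα hβ).2 (existsUnique_recursion A B C D E S),
    fun α β hα hβ h₁ h₂ => (consistency_iff_recursion hA0 hB0 hC0 hD0 hS hα hβ).1 ⟨h₁, h₂⟩⟩

/-- there is a unique pair of sequences `(α_ℓ)_{ℓ≥1}` (encoded by
`α : ℕ → _` with `α 0 = 0`) and `(β_m)_{m≥0}` with `β₀ = E` satisfying the
consistency identities `X(t) = 𝔸(t) + 𝔅(t)𝔹(t)` and `𝔹(t)X(t) = ℂ(t) + 𝔻(t)𝔹(t)`;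
moreover these sequences obey the recursion
`α_{k+1} = A_{k+1} + Σ_{j=1}^{k+1} B_j β_{k+1−j} − Σ_{j=2}^{k+1} (1/j!) Γ^j_{k+1}` and
`β_{k+1} = S⁻¹ (C_{k+1} + Σ_{j=1}^{k+1} D_j β_{k+1−j} − Σ_{j=1}^{k+1} (1/j!) K^j_{k+1})`. -/
theorem taylor_expansion_exists_unique (N q : ℕ) (hN : 1 ≤ N) (hq : N < q)
    (R : Type*) [CommRing R] [Algebra ℚ R]
    (A : ℕ → Matrix (Fin N) (Fin N) R) (B : ℕ → Matrix (Fin N) (Fin (q - N)) R)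
    (C : ℕ → Matrix (Fin (q - N)) (Fin N) R) (D : ℕ → Matrix (Fin (q - N)) (Fin (q - N)) R)
    (E : Matrix (Fin (q - N)) (Fin N) R) (S : Matrix (Fin (q - N)) (Fin (q - N)) R)
    (hSdiag : S.IsDiag) (hSunit : ∀ i, IsUnit (S i i))
    (hA0 : A 0 = 1) (hB0 : B 0 = 0) (hC0 : C 0 = S * E) (hD0 : D 0 = 1 - S) :
    (∃! ab : (ℕ → Matrix (Fin N) (Fin N) R) × (ℕ → Matrix (Fin (q - N)) (Fin N) R),
      ab.1 0 = 0 ∧ ab.2 0 = E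
      ∧ (∀ p : ℕ, Xcoef ab.1 p = A p + ∑ ij ∈ Finset.HasAntidiagonal.antidiagonal p, B ij.1 * ab.2 ij.2)
      ∧ (∀ p : ℕ, ∑ ij ∈ Finset.HasAntidiagonal.antidiagonal p, ab.2 ij.1 * Xcoef ab.1 ij.2
          = C p + ∑ ij ∈ Finset.HasAntidiagonal.antidiagonal p, D ij.1 * ab.2 ij.2))
    ∧ (∀ (α : ℕ → Matrix (Fin N) (Fin N) R) (β : ℕ → Matrix (Fin (q - N)) (Fin N) R),
        α 0 = 0 → β 0 = E →
        (∀ p : ℕ, Xcoef α p = A p + ∑ ij ∈ Finset.HasAntidiagonal.antidiagonal p, B ij.1 * β ij.2) →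
        (∀ p : ℕ, ∑ ij ∈ Finset.HasAntidiagonal.antidiagonal p, β ij.1 * Xcoef α ij.2
            = C p + ∑ ij ∈ Finset.HasAntidiagonal.antidiagonal p, D ij.1 * β ij.2) →
        ∀ k : ℕ,
          α (k + 1) = A (k + 1) + (∑ j ∈ Finset.Icc 1 (k + 1), B j * β (k + 1 - j))
              - ∑ j ∈ Finset.Icc 2 (k + 1), ((j.factorial : ℚ)⁻¹) • seriesPow α j (k + 1)
          ∧ β (k + 1) = S⁻¹ * (C (k + 1) + (∑ j ∈ Finset.Icc 1 (k + 1), D j * β (k + 1 - j))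
              - ∑ j ∈ Finset.Icc 1 (k + 1), ((j.factorial : ℚ)⁻¹) • Kcoef β α j (k + 1))) :=
  taylor_expansion_exists_unique_general N q R A B C D E S hSdiag hSunit hA0 hB0 hC0 hD0
end
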